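/- arXiv:math/0205082 — 2 statements merged into one kernel-verified Lean document; each statement's English description precedes it below -/
import Mathlib

section
/- Let φ, ψ : ℝ → [0,∞) be convex functions, differentiable everywhere on ℝ, such that φ(0) = ψ(0) and φ(α) ≤ ψ(α) for all α ∈ ℝ, and suppose φ' and ψ' are absolutely continuous on [0,1]. If φ''(α) → ∞ as α → 0 along a subset of [0,1] of full Lebesgue measure (i.e., there is a measurable set E ⊆ [0,1] of Lebesgue measure 1 on which φ'' exists and φ''(α) → ∞ as α → 0, α ∈ E), then for every C > 0 the set {α ∈ [0,1] : ψ''(α) exists and ψ''(α) ≤ C} has Lebesgue measure strictly less than 1. -/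
open MeasureTheory Filter Topology Set
open scoped ENNReal NNReal

noncomputable section

/-- `M` is an Orlicz function: even, continuous, convex, `M 0 = 0`, `M 1 = 1`,
`M u / u → 0` as `u → 0⁺` and `M u / u → ∞` as `u → ∞`. -/
def IsOrliczFn (M : ℝ → ℝ) : Prop :=
  (∀ u : ℝ, M (-u) = M u) ∧ Continuous M ∧ ConvexOn ℝ Set.univ M ∧
    M 0 = 0 ∧ M 1 = 1 ∧
    Filter.Tendsto (fun u => M u / u) (nhdsWithin 0 (Set.Ioi 0)) (nhds 0) ∧
    Filter.Tendsto (fun u => M u / u) Filter.atTop Filter.atTop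

/-- The Δ₂ condition near zero: `M (2u) ≤ k · M u` for all `|u| ≤ u₀`. -/
def Delta2Zero (M : ℝ → ℝ) : Prop :=
  ∃ k > (0:ℝ), ∃ u₀ > (0:ℝ), ∀ u : ℝ, |u| ≤ u₀ → M (2 * u) ≤ k * M u

/-- The Δ₂₊ condition near zero: `M` is twice differentiable (away from the origin for
the second derivative), satisfies Δ₂ near zero, and `u·M''(u)/M'(u) < β` for `0 < u ≤ u₀`. -/
def Delta2PlusZero (M : ℝ → ℝ) : Prop :=
  (∀ u : ℝ, DifferentiableAt ℝ M u) ∧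
  (∀ u : ℝ, u ≠ 0 → DifferentiableAt ℝ (deriv M) u) ∧
  Delta2Zero M ∧
  ∃ β > (0:ℝ), ∃ u₀ > (0:ℝ), ∀ u : ℝ, 0 < u → u ≤ u₀ →
    u * deriv (deriv M) u / deriv M u < β

/-- The modular `ρ_M(x) = ∑ M(x_j)` of a real sequence, valued in `ℝ≥0∞`. -/
def rhoM (M : ℝ → ℝ) (x : ℕ → ℝ) : ℝ≥0∞ := ∑' j, ENNReal.ofReal (M (x j))

/-- Membership in the Orlicz sequence space `ℓ_M`: `ρ_M(c·x) < ∞` for some `c > 0`. -/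
def MemLM (M : ℝ → ℝ) (x : ℕ → ℝ) : Prop :=
  ∃ c > (0:ℝ), rhoM M (fun j => c * x j) < ⊤

/-- The Luxemburg norm `‖x‖_M = inf { l > 0 : ρ_M(x/l) ≤ 1 }`. -/
def luxNorm (M : ℝ → ℝ) (x : ℕ → ℝ) : ℝ :=
  sInf {l : ℝ | 0 < l ∧ rhoM M (fun j => x j / l) ≤ 1}

/-- The right derivative of `M` at `t`. -/
def rightDeriv (M : ℝ → ℝ) (t : ℝ) : ℝ := derivWithin M (Set.Ici t) t

/-- The right inverse `q` of the right derivative of `M`. -/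
def rightInvDeriv (M : ℝ → ℝ) (s : ℝ) : ℝ :=
  sSup {t : ℝ | 0 ≤ t ∧ rightDeriv M t ≤ s}

/-- The complementary Orlicz function `M*(v) = ∫₀^{|v|} q(s) ds`. -/
def conjM (M : ℝ → ℝ) (v : ℝ) : ℝ := ∫ s in (0:ℝ)..|v|, rightInvDeriv M s

/-- The Orlicz norm `‖x‖_M^O = sup { ∑ x_j y_j : ρ_{M*}(y) ≤ 1 }`. -/
def orlNorm (M : ℝ → ℝ) (x : ℕ → ℝ) : ℝ :=
  sSup {r : ℝ | ∃ y : ℕ → ℝ, rhoM (conjM M) y ≤ 1 ∧ r = ∑' j, x j * y j}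

/-- The Matuszewska–Orlicz index
`α⁰_M = sup { p : sup { M(λt)/(tᵖ·M(λ)) : λ,t ∈ (0,1] } < ∞ }`. -/
def matIndex (M : ℝ → ℝ) : ℝ :=
  sSup {p : ℝ | ∃ K : ℝ, ∀ lam ∈ Set.Ioc (0:ℝ) 1, ∀ t ∈ Set.Ioc (0:ℝ) 1,
    M (lam * t) / (t ^ p * M lam) ≤ K}

/-- `h` is absolutely continuous on `[a,b]`: it is the integral of an integrable function. -/
def AbsContOn (h : ℝ → ℝ) (a b : ℝ) : Prop :=
  ∃ g : ℝ → ℝ, IntervalIntegrable g MeasureTheory.volume a b ∧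
    ∀ x ∈ Set.Icc a b, h x = h a + ∫ s in a..x, g s

/-- `M` belongs to the class `AC^k` at zero. -/
def MemACk (M : ℝ → ℝ) (k : ℕ) : Prop :=
  (k : ℝ) < matIndex M ∧
  (∀ a b : ℝ, AbsContOn (iteratedDeriv k M) a b) ∧
  ∃ c > (0:ℝ), ∀ᵐ t ∂(MeasureTheory.volume.restrict (Set.Ici (0:ℝ))),
    t ^ (k + 1) * |iteratedDeriv (k + 1) M t| ≤ c * M (c * t)

/-- The `ℓ∞` norm of a sequence, as an extended real. -/
def linftyE (x : ℕ → ℝ) : ℝ≥0∞ := ⨆ j, ENNReal.ofReal |x j|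

/-- `P` maps `ℓ_M` into itself and is additive and homogeneous on `ℓ_M`. -/
def IsLinearOnLM (M : ℝ → ℝ) (P : (ℕ → ℝ) → (ℕ → ℝ)) : Prop :=
  (∀ f, MemLM M f → MemLM M (P f)) ∧
  (∀ f g, MemLM M f → MemLM M g → P (f + g) = P f + P g) ∧
  (∀ (c : ℝ) f, MemLM M f → P (c • f) = c • P f)

/-- `P` is an averaging projection given by mutually disjointly supported `u_j` and
biorthogonal bounded linear functionals `u_j*` (boundedness w.r.t. the norm `Nrm`),
and moreover the trichotomy on the `u_j` and `M` holds. -/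
def IsAveragingWithTrichotomy (M : ℝ → ℝ) (Nrm : (ℕ → ℝ) → ℝ)
    (P : (ℕ → ℝ) → (ℕ → ℝ)) : Prop :=
  ∃ (J : Type) (u : J → ℕ → ℝ) (ustar : J → (ℕ → ℝ) → ℝ),
    (∀ j, MemLM M (u j)) ∧
    (Pairwise fun j k => Disjoint (Function.support (u j)) (Function.support (u k))) ∧
    (∀ j, ∀ f g, MemLM M f → MemLM M g → ustar j (f + g) = ustar j f + ustar j g) ∧
    (∀ j, ∀ (c : ℝ) f, MemLM M f → ustar j (c • f) = c * ustar j f) ∧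
    (∀ j, ∃ C : ℝ, ∀ f, MemLM M f → |ustar j f| ≤ C * Nrm f) ∧
    (∀ j k, j ≠ k → ustar j (u k) = 0) ∧
    (∀ j, ustar j (u j) = 1) ∧
    (∀ f, MemLM M f → ∀ n, P f n = ∑' j, ustar j f * u j n) ∧
    (((∀ j, (Function.support (u j)).Finite) ∧
        ∀ j, ∀ k ∈ Function.support (u j), ∀ l ∈ Function.support (u j),
          |u j k| = |u j l|) ∨
      (∃ p : ℝ, 1 < p ∧ ∃ C : ℝ, ∀ t : ℝ, 0 ≤ t →
        ENNReal.ofReal t ≤ ⨆ j, linftyE (u j) → M t = C * t ^ p) ∨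
      (∃ p : ℝ, 1 < p ∧ ∃ C₁ C₂ γ : ℝ, 0 < C₁ ∧ 0 < C₂ ∧ 0 < γ ∧
        (∀ t : ℝ, 0 ≤ t → ENNReal.ofReal t ≤ ⨆ j, linftyE (u j) →
          C₂ * t ^ p ≤ M t ∧ M t ≤ C₁ * t ^ p) ∧
        (∀ j, linftyE (u j) < ⊤) ∧
        (∀ j, ∀ k ∈ Function.support (u j), ∃ m : ℤ,
          |u j k| = γ ^ m * (linftyE (u j)).toReal)))

/-- The norm `Nrm` on the Orlicz sequence space `ℓ_M` is `UF^k`-smooth: there exist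
continuous symmetric `j`-linear forms `T^j_f`, `1 ≤ j ≤ k`, such that
`‖f + αg‖ = ‖f‖ + ∑_{j=1}^k αʲ T^j_f(g,…,g) + o(|α|ᵏ)` uniformly for `f, g` in the
unit sphere. (`T f j` represents the `(j+1)`-linear form `T^{j+1}_f`.) -/
def UFkSmooth (M : ℝ → ℝ) (Nrm : (ℕ → ℝ) → ℝ) (k : ℕ) : Prop :=
  ∃ T : (ℕ → ℝ) → (j : ℕ) → ((Fin (j + 1) → ℕ → ℝ) → ℝ),
    (∀ f, MemLM M f → Nrm f = 1 → ∀ j < k,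
      ((∀ (i : Fin (j + 1)) (v : Fin (j + 1) → ℕ → ℝ) (w : ℕ → ℝ),
          (∀ i', MemLM M (v i')) → MemLM M w →
          T f j (Function.update v i (v i + w)) =
            T f j v + T f j (Function.update v i w)) ∧
        (∀ (i : Fin (j + 1)) (v : Fin (j + 1) → ℕ → ℝ) (c : ℝ),
          (∀ i', MemLM M (v i')) →
          T f j (Function.update v i (c • v i)) = c * T f j v) ∧
        (∀ (σ : Equiv.Perm (Fin (j + 1))) (v : Fin (j + 1) → ℕ → ℝ),
          (∀ i', MemLM M (v i')) → T f j (fun i' => v (σ i')) = T f j v) ∧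
        (∃ C : ℝ, ∀ v : Fin (j + 1) → ℕ → ℝ, (∀ i', MemLM M (v i')) →
          |T f j v| ≤ C * ∏ i' : Fin (j + 1), Nrm (v i')))) ∧
    ∀ ε > (0:ℝ), ∃ δ > (0:ℝ), ∀ f, MemLM M f → Nrm f = 1 →
      ∀ g, MemLM M g → Nrm g = 1 → ∀ α : ℝ, α ≠ 0 → |α| ≤ δ →
        |Nrm (f + α • g) - Nrm f -
          ∑ j ∈ Finset.range k, α ^ (j + 1) * T f j (fun _ => g)| ≤ ε * |α| ^ k

/-! Suppose `ψ'' ≤ C` almost everywhere on `[0,1]`. Since `φ'' → ∞` along a full-measure set,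
`φ'' ≥ C + 1` almost everywhere on some `(0, x₀)`, so `D = ψ - φ` has `D'' ≤ -1` there. Absolute
continuity of `D'` turns this into `D'(x) ≤ D'(0) - x`, and `D'(0) = 0` because `D ≥ 0 = D(0)`.
Hence `D` is strictly decreasing on `[0, x₀]`, so `D(x₀) < 0`, contradicting `φ ≤ ψ`. -/

theorem ae_mem_of_subset_Icc_of_one_le_volume {s : Set ℝ} (hs : NullMeasurableSet s)
    (hsub : s ⊆ Icc 0 1) (h : 1 ≤ volume s) : ∀ᵐ t, t ∈ Icc (0:ℝ) 1 → t ∈ s :=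
  (ae_eq_of_subset_of_measure_ge hsub (by rwa [Real.volume_Icc, sub_zero, ENNReal.ofReal_one]) hs
    (by simp)).mem_iff.mono fun _ h => h.2

namespace AbsContOn

variable {h k : ℝ → ℝ} {a b : ℝ}

theorem mono (hh : AbsContOn h a b) {b' : ℝ} (hb' : b' ∈ Icc a b) : AbsContOn h a b' :=
  let ⟨g, hg, hhg⟩ := hh
  ⟨g, hg.mono_set (uIcc_subset_uIcc_left (Icc_subset_uIcc hb')),
    fun x hx => hhg x ⟨hx.1, hx.2.trans hb'.2⟩⟩

theorem sub (hh : AbsContOn h a b) (hk : AbsContOn k a b) :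
    AbsContOn (fun x => h x - k x) a b := by
  obtain ⟨g, hg, hhg⟩ := hh
  obtain ⟨g', hg', hkg'⟩ := hk
  refine ⟨fun s => g s - g' s, hg.sub hg', fun x hx => ?_⟩
  have hsub : uIcc a x ⊆ uIcc a b := uIcc_subset_uIcc_left (Icc_subset_uIcc hx)
  dsimp only
  rw [hhg x hx, hkg' x hx, intervalIntegral.integral_sub (hg.mono_set hsub) (hg'.mono_set hsub)]
  ring

theorem ae_hasDerivAt_of_eq_add_integral {g : ℝ → ℝ} (hg : IntervalIntegrable g volume a b)
    (hhg : ∀ x ∈ Icc a b, h x = h a + ∫ s in a..x, g s) :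
    ∀ᵐ x, x ∈ Ioo a b → HasDerivAt h (g x) x := by
  filter_upwards [hg.ae_hasDerivAt_integral] with x hx hxab
  have hab : a ≤ b := (hxab.1.trans hxab.2).le
  have hprim := hx (uIcc_of_le hab ▸ Ioo_subset_Icc_self hxab) a left_mem_uIcc
  refine (hprim.const_add (h a)).congr_of_eventuallyEq ?_
  filter_upwards [Icc_mem_nhds hxab.1 hxab.2] with y hy using hhg y hy

theorem le_add_mul_of_ae_deriv_le (hh : AbsContOn h a b) {c : ℝ}
    (hd : ∀ᵐ t, t ∈ Ioo a b → deriv h t ≤ c) : ∀ x ∈ Icc a b, h x ≤ h a + c * (x - a) := by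
  obtain ⟨g, hg, hhg⟩ := hh
  intro x hx
  have hgc : ∀ᵐ t ∂volume.restrict (Icc a x), g t ≤ c := by
    rw [← Measure.restrict_congr_set Ioo_ae_eq_Icc, ae_restrict_iff' measurableSet_Ioo]
    filter_upwards [hd, ae_hasDerivAt_of_eq_add_integral hg hhg] with t hdt hgt htx
    have htab : t ∈ Ioo a b := ⟨htx.1, htx.2.trans_le hx.2⟩
    exact (hgt htab).deriv ▸ hdt htab
  have hint : ∫ t in a..x, g t ≤ ∫ _ in a..x, c :=
    intervalIntegral.integral_mono_ae_restrict hx.1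
      (hg.mono_set (uIcc_subset_uIcc_left (Icc_subset_uIcc hx))) intervalIntegrable_const hgc
  rw [hhg x hx]
  simpa [mul_comm] using hint

end AbsContOn

theorem strictAntiOn_of_ae_deriv_deriv_le {f : ℝ → ℝ} {a b c : ℝ} (hc : c < 0)
    (hf : ContinuousOn f (Icc a b)) (hf' : AbsContOn (deriv f) a b) (ha : deriv f a ≤ 0)
    (hd : ∀ᵐ t, t ∈ Ioo a b → deriv (deriv f) t ≤ c) : StrictAntiOn f (Icc a b) := by
  refine strictAntiOn_of_deriv_neg (convex_Icc a b) hf fun x hx => ?_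
  rw [interior_Icc] at hx
  have hslope := mul_neg_of_neg_of_pos hc (sub_pos.2 hx.1)
  linarith [hf'.le_add_mul_of_ae_deriv_le hd x (Ioo_subset_Icc_self hx)]

theorem stmt2_general (φ ψ : ℝ → ℝ)
    (hφ_diff : Differentiable ℝ φ) (hψ_diff : Differentiable ℝ ψ)
    (h0 : φ 0 = ψ 0) (hle : ∀ α : ℝ, φ α ≤ ψ α)
    (hφ_ac : AbsContOn (deriv φ) 0 1) (hψ_ac : AbsContOn (deriv ψ) 0 1)
    (E : Set ℝ) (hE_sub : E ⊆ Set.Icc 0 1) (hE_meas : MeasurableSet E)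
    (hE_vol : volume E = 1)
    (hE_diff : ∀ α ∈ E, DifferentiableAt ℝ (deriv φ) α)
    (hblow : Filter.Tendsto (fun α => deriv (deriv φ) α) (nhdsWithin 0 E) Filter.atTop) :
    ∀ C > (0:ℝ),
      volume {α ∈ Set.Icc (0:ℝ) 1 |
        DifferentiableAt ℝ (deriv ψ) α ∧ deriv (deriv ψ) α ≤ C} < 1 := by
  intro C _
  by_contra! hA
  obtain ⟨u, hu, hφ''⟩ := exists_Ico_subset_of_mem_nhds
    (eventually_nhdsWithin_iff.1 (hblow.eventually_ge_atTop (C + 1))) ⟨1, one_pos⟩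
  set x₀ := min u 1
  have hx₀ : x₀ ∈ Ioc 0 1 := ⟨lt_min hu one_pos, min_le_right u 1⟩
  set A := {α ∈ Icc (0:ℝ) 1 | DifferentiableAt ℝ (deriv ψ) α ∧ deriv (deriv ψ) α ≤ C}
  have hA_meas : MeasurableSet A := measurableSet_Icc.inter
    ((measurableSet_of_differentiableAt ℝ (deriv ψ)).inter
      (measurableSet_le (measurable_deriv (deriv ψ)) measurable_const))
  set D : ℝ → ℝ := fun x => ψ x - φ x
  have hD' : deriv D = fun x => deriv ψ x - deriv φ x :=
    funext fun x => deriv_fun_sub (hψ_diff x) (hφ_diff x)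
  have hD'' : ∀ᵐ t, t ∈ Ioo 0 x₀ → deriv (deriv D) t ≤ -1 := by
    filter_upwards [ae_mem_of_subset_Icc_of_one_le_volume hA_meas.nullMeasurableSet
        (sep_subset _ _) hA, ae_mem_of_subset_Icc_of_one_le_volume hE_meas.nullMeasurableSet
        hE_sub hE_vol.ge] with t htA htE ht
    have ht01 : t ∈ Icc (0:ℝ) 1 := ⟨ht.1.le, ht.2.le.trans hx₀.2⟩
    obtain ⟨-, hψd, hψ''⟩ := htA ht01
    rw [hD', deriv_fun_sub hψd (hE_diff t (htE ht01))]
    linarith [hφ'' ⟨ht.1.le, ht.2.trans_le (min_le_left u 1)⟩ (htE ht01)]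
  have hD0 : IsLocalMin D 0 := Eventually.of_forall fun x => by
    simp only [D, h0, sub_self, sub_nonneg, hle x]
  have hanti : StrictAntiOn D (Icc 0 x₀) :=
    strictAntiOn_of_ae_deriv_deriv_le neg_one_lt_zero
      (hψ_diff.sub hφ_diff).continuous.continuousOn
      (hD' ▸ (hψ_ac.sub hφ_ac).mono ⟨hx₀.1.le, hx₀.2⟩) hD0.deriv_eq_zero.le hD''
  have := hanti (left_mem_Icc.2 hx₀.1.le) (right_mem_Icc.2 hx₀.1.le) hx₀.1
  linarith [hle x₀]

/-- if moreover `φ'` and `ψ'` are absolutely continuous on `[0,1]` and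
`φ''(α) → ∞` as `α → 0` along a subset of `[0,1]` of full measure, then for every `C > 0`
the set `{α ∈ [0,1] : ψ''(α) exists and ψ''(α) ≤ C}` has measure `< 1`. -/
theorem stmt2 (φ ψ : ℝ → ℝ)
    (hφ_nonneg : ∀ x : ℝ, 0 ≤ φ x) (hψ_nonneg : ∀ x : ℝ, 0 ≤ ψ x)
    (hφ_conv : ConvexOn ℝ Set.univ φ) (hψ_conv : ConvexOn ℝ Set.univ ψ)
    (hφ_diff : Differentiable ℝ φ) (hψ_diff : Differentiable ℝ ψ)
    (h0 : φ 0 = ψ 0) (hle : ∀ α : ℝ, φ α ≤ ψ α)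
    (hφ_ac : AbsContOn (deriv φ) 0 1) (hψ_ac : AbsContOn (deriv ψ) 0 1)
    (E : Set ℝ) (hE_sub : E ⊆ Set.Icc 0 1) (hE_meas : MeasurableSet E)
    (hE_vol : volume E = 1)
    (hE_diff : ∀ α ∈ E, DifferentiableAt ℝ (deriv φ) α)
    (hblow : Filter.Tendsto (fun α => deriv (deriv φ) α) (nhdsWithin 0 E) Filter.atTop) :
    ∀ C > (0:ℝ),
      volume {α ∈ Set.Icc (0:ℝ) 1 |
        DifferentiableAt ℝ (deriv ψ) α ∧ deriv (deriv ψ) α ≤ C} < 1 :=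
  stmt2_general φ ψ hφ_diff hψ_diff h0 hle hφ_ac hψ_ac E hE_sub hE_meas hE_vol hE_diff hblow
end
end

section
/- Let a ∈ (√(2/3), 1) and define M_a : [0,∞) → ℝ by M_a(t) = t² for 0 ≤ t ≤ a and M_a(t) = (1+a)·t − a for a ≤ t. Let ℓ⁴_{M_a} denote ℝ⁴ equipped with the Luxemburg norm ‖x‖ = inf{λ > 0 : ∑_{j=1}^4 M_a(|x_j|/λ) ≤ 1}. Then there exist a 2-dimensional subspace Y of ℓ⁴_{M_a} and a linear projection P from ℓ⁴_{M_a} onto Y with ‖P‖ = 1 such that Y is isometrically isomorphic to ℓ₂² (ℝ² with the Euclidean norm) and Y is not spanned by two disjointly supported vectors of ℝ⁴. -/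
open MeasureTheory Filter Topology Set
open scoped ENNReal NNReal

noncomputable section

set_option maxHeartbeats 1000000 in
/-- for `a ∈ (√(2/3), 1)` the four-dimensional Orlicz space `ℓ⁴_{M_a}`
with the Luxemburg norm contains a two-dimensional `1`-complemented subspace `Y`
isometric to `ℓ₂²` which is not spanned by two disjointly supported vectors. -/
theorem stmt19 (a : ℝ) (ha₁ : Real.sqrt (2 / 3) < a) (ha₂ : a < 1)
    (Ma : ℝ → ℝ)
    (hMa₁ : ∀ t : ℝ, 0 ≤ t → t ≤ a → Ma t = t ^ 2)
    (hMa₂ : ∀ t : ℝ, a ≤ t → Ma t = (1 + a) * t - a)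
    (nrm : (Fin 4 → ℝ) → ℝ)
    (hnrm : ∀ x : Fin 4 → ℝ,
      nrm x = sInf {l : ℝ | 0 < l ∧ ∑ j, Ma (|x j| / l) ≤ 1}) :
    ∃ (Y : Submodule ℝ (Fin 4 → ℝ)) (P : (Fin 4 → ℝ) →ₗ[ℝ] (Fin 4 → ℝ)),
      Module.finrank ℝ Y = 2 ∧
      LinearMap.range P = Y ∧
      (∀ x, P (P x) = P x) ∧
      (∀ x, nrm (P x) ≤ nrm x) ∧
      (∀ c : ℝ, (∀ x, nrm (P x) ≤ c * nrm x) → 1 ≤ c) ∧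
      (∃ u v : Fin 4 → ℝ, u ∈ Y ∧ v ∈ Y ∧
        (∀ y ∈ Y, ∃ s t : ℝ, y = s • u + t • v) ∧
        (∀ s t : ℝ, nrm (s • u + t • v) = Real.sqrt (s ^ 2 + t ^ 2))) ∧
      ¬ ∃ u v : Fin 4 → ℝ, Disjoint (Function.support u) (Function.support v) ∧
          Y = Submodule.span ℝ {u, v} := by
  -- basic facts about a
  have ha0 : (0:ℝ) < a := lt_of_le_of_lt (Real.sqrt_nonneg _) ha₁
  have ha2 : (2:ℝ)/3 < a ^ 2 := by
    nlinarith [Real.sq_sqrt (show (0:ℝ) ≤ 2/3 by norm_num), Real.sqrt_nonneg ((2:ℝ)/3)]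
  -- facts about Ma
  have hMa0 : Ma 0 = 0 := by rw [hMa₁ 0 le_rfl ha0.le]; ring
  have hMa_nonneg : ∀ t : ℝ, 0 ≤ t → 0 ≤ Ma t := by
    intro t ht
    rcases le_or_gt t a with h | h
    · rw [hMa₁ t ht h]; positivity
    · rw [hMa₂ t h.le]; nlinarith
  have hMa_le_one : ∀ t : ℝ, 0 ≤ t → Ma t ≤ 1 → t ≤ 1 := by
    intro t ht h
    by_contra hc
    push_neg at hc
    rw [hMa₂ t (by linarith)] at h
    nlinarith
  have hsq_le : ∀ t : ℝ, 0 ≤ t → t ≤ 1 → t ^ 2 ≤ Ma t := by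
    intro t ht h1
    rcases le_or_gt t a with h | h
    · rw [hMa₁ t ht h]
    · rw [hMa₂ t h.le]; nlinarith
  -- the constant d
  set d : ℝ := Real.sqrt (7/50) with hd
  have hd2 : d ^ 2 = 7/50 := Real.sq_sqrt (by norm_num)
  have hdpos : 0 < d := Real.sqrt_pos.mpr (by norm_num)
  have hdlt : d < 3/5 := by nlinarith
  -- the vectors
  set u : Fin 4 → ℝ := ![1/2, 1/2, 1/2, 1/2] with hu
  set v : Fin 4 → ℝ := ![3/5, d, -(3/5), -d] with hv
  -- sum of squares of s•u + t•v
  have hsum : ∀ s t : ℝ, ∑ j, ((s • u + t • v) j) ^ 2 = s ^ 2 + t ^ 2 := by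
    intro s t
    simp only [hu, hv, Fin.sum_univ_four, Pi.add_apply, Pi.smul_apply, smul_eq_mul,
      Matrix.cons_val_zero, Matrix.cons_val_one, Matrix.head_cons,
      Matrix.cons_val_two, Matrix.tail_cons, Matrix.cons_val_three]
    linear_combination (2*t^2) * hd2
  -- coordinate bound for vectors in Y
  have hcoord : ∀ s t : ℝ, ∀ j : Fin 4, ((s • u + t • v) j) ^ 2 ≤ (2/3) * (s ^ 2 + t ^ 2) := by
    intro s t j
    fin_cases j <;>
      simp [hu, hv] <;>
      nlinarith [sq_nonneg (3/5*s - 1/2*t), sq_nonneg (d*s - 1/2*t), sq_nonneg (3/5*s + 1/2*t), sq_nonneg (d*s + 1/2*t), hd2, sq_nonneg s, sq_nonneg t]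
  -- lower bound of the Luxemburg norm by the euclidean norm
  have hnrm_lb : ∀ x : Fin 4 → ℝ, Real.sqrt (∑ j, x j ^ 2) ≤ nrm x := by
    intro x
    rw [hnrm]
    have hsx : (0:ℝ) ≤ ∑ j, x j ^ 2 := by positivity
    have hxj : ∀ j, |x j| ≤ Real.sqrt (∑ j, x j ^ 2) := by
      intro j
      rw [← Real.sqrt_sq_eq_abs]
      apply Real.sqrt_le_sqrt
      exact Finset.single_le_sum (fun i _ => sq_nonneg (x i)) (Finset.mem_univ j)
    obtain ⟨L, hLdef⟩ : ∃ L : ℝ, L = Real.sqrt (∑ j, x j ^ 2) := ⟨_, rfl⟩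
    have hLnn : 0 ≤ L := hLdef ▸ Real.sqrt_nonneg _
    have hsqL : L ^ 2 = ∑ j, x j ^ 2 := by rw [hLdef]; exact Real.sq_sqrt hsx
    apply le_csInf
    · have hl0 : (0:ℝ) < L / a + 1 := by positivity
      refine ⟨L / a + 1, hl0, ?_⟩
      have hal : a * (L / a + 1) = L + a := by field_simp
      have hLle : L ≤ L / a + 1 := by
        have h' : L ≤ L / a := by
          rw [le_div_iff₀ ha0]; nlinarith
        linarith
      have hkey : ∀ j, Ma (|x j| / (L / a + 1)) = (|x j| / (L / a + 1)) ^ 2 := by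
        intro j
        apply hMa₁ _ (by positivity)
        rw [div_le_iff₀ hl0, hal]
        have := hxj j
        rw [← hLdef] at this
        linarith
      calc ∑ j, Ma (|x j| / (L / a + 1)) = ∑ j, (|x j| / (L / a + 1)) ^ 2 :=
            Finset.sum_congr rfl fun j _ => hkey j
        _ = (∑ j, x j ^ 2) / (L / a + 1) ^ 2 := by
            rw [Finset.sum_div]; exact Finset.sum_congr rfl fun j _ => by rw [div_pow, sq_abs]
        _ ≤ 1 := by
            rw [div_le_one (by positivity)]
            nlinarith
    · rintro l ⟨hl0, hle⟩
      have hterm : ∀ j, Ma (|x j| / l) ≤ 1 := fun j =>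
        le_trans (Finset.single_le_sum (fun i _ => hMa_nonneg _ (div_nonneg (abs_nonneg _) hl0.le)) (Finset.mem_univ j)) hle
      have h1 : ∀ j, |x j| / l ≤ 1 := fun j => hMa_le_one _ (div_nonneg (abs_nonneg _) hl0.le) (hterm j)
      have h2 : ∑ j, (|x j| / l) ^ 2 ≤ 1 :=
        le_trans (Finset.sum_le_sum fun j _ => hsq_le _ (div_nonneg (abs_nonneg _) hl0.le) (h1 j)) hle
      have h3 : (∑ j, x j ^ 2) / l ^ 2 ≤ 1 := by
        calc (∑ j, x j ^ 2) / l ^ 2 = ∑ j, (|x j| / l) ^ 2 := by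
              rw [Finset.sum_div]; exact (Finset.sum_congr rfl fun j _ => by rw [div_pow, sq_abs]).symm
          _ ≤ 1 := h2
      have h4 : ∑ j, x j ^ 2 ≤ l ^ 2 := by
        rw [div_le_one (by positivity)] at h3; exact h3
      calc Real.sqrt (∑ j, x j ^ 2) ≤ Real.sqrt (l ^ 2) := Real.sqrt_le_sqrt h4
        _ = l := Real.sqrt_sq hl0.le
  -- nrm of zero
  have hnrm_zero : nrm 0 = 0 := by
    rw [hnrm]
    have : {l : ℝ | 0 < l ∧ ∑ j : Fin 4, Ma (|(0 : Fin 4 → ℝ) j| / l) ≤ 1} = Set.Ioi 0 := by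
      ext l
      simp [hMa0]
    rw [this, csInf_Ioi]
  -- norm formula on Y
  have hY : ∀ s t : ℝ, nrm (s • u + t • v) = Real.sqrt (s ^ 2 + t ^ 2) := by
    intro s t
    rcases eq_or_lt_of_le (show (0:ℝ) ≤ s ^ 2 + t ^ 2 by positivity) with h0 | h0
    · have hs : s = 0 := by nlinarith [sq_nonneg s, sq_nonneg t]
      have ht : t = 0 := by nlinarith [sq_nonneg s, sq_nonneg t]
      rw [hs, ht]
      simp [hnrm_zero]
    · apply le_antisymm
      · rw [hnrm]
        have hL : (0:ℝ) < Real.sqrt (s ^ 2 + t ^ 2) := Real.sqrt_pos.mpr h0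
        apply csInf_le ⟨0, fun l hl => hl.1.le⟩
        refine ⟨hL, ?_⟩
        have hkey : ∀ j, Ma (|(s • u + t • v) j| / Real.sqrt (s ^ 2 + t ^ 2))
            = (|(s • u + t • v) j| / Real.sqrt (s ^ 2 + t ^ 2)) ^ 2 := by
          intro j
          apply hMa₁ _ (by positivity)
          rw [div_le_iff₀ hL]
          have h1 : ((s • u + t • v) j) ^ 2 ≤ a ^ 2 * (s ^ 2 + t ^ 2) := by
            nlinarith [hcoord s t j]
          have h2 : |((s • u + t • v) j)| = Real.sqrt (((s • u + t • v) j) ^ 2) :=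
            (Real.sqrt_sq_eq_abs _).symm
          rw [h2]
          calc Real.sqrt (((s • u + t • v) j) ^ 2) ≤ Real.sqrt (a ^ 2 * (s ^ 2 + t ^ 2)) :=
                Real.sqrt_le_sqrt h1
            _ = a * Real.sqrt (s ^ 2 + t ^ 2) := by
                rw [Real.sqrt_mul (by positivity), Real.sqrt_sq ha0.le]
        calc ∑ j, Ma (|(s • u + t • v) j| / Real.sqrt (s ^ 2 + t ^ 2))
            = ∑ j, (|(s • u + t • v) j| / Real.sqrt (s ^ 2 + t ^ 2)) ^ 2 :=
              Finset.sum_congr rfl fun j _ => hkey j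
          _ = (∑ j, ((s • u + t • v) j) ^ 2) / (s ^ 2 + t ^ 2) := by
              rw [Finset.sum_div]
              refine Finset.sum_congr rfl fun j _ => ?_
              rw [div_pow, sq_abs, Real.sq_sqrt h0.le]
          _ ≤ 1 := le_of_eq (by rw [hsum, div_self (ne_of_gt h0)])
      · have := hnrm_lb (s • u + t • v)
        rwa [hsum] at this
  -- Bessel inequality
  have hB : ∀ x : Fin 4 → ℝ, (∑ j, x j * u j) ^ 2 + (∑ j, x j * v j) ^ 2 ≤ ∑ j, x j ^ 2 := by
    intro x
    simp only [hu, hv, Fin.sum_univ_four, Matrix.cons_val_zero, Matrix.cons_val_one,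
      Matrix.head_cons, Matrix.cons_val_two, Matrix.tail_cons, Matrix.cons_val_three]
    have id1 : (x 0 ^ 2 + x 1 ^ 2 + x 2 ^ 2 + x 3 ^ 2)
        - (x 0 * (1/2) + x 1 * (1/2) + x 2 * (1/2) + x 3 * (1/2)) ^ 2
        - (x 0 * (3/5) + x 1 * d + x 2 * (-(3/5)) + x 3 * (-d)) ^ 2
        = (x 0 - (x 0 * (1/2) + x 1 * (1/2) + x 2 * (1/2) + x 3 * (1/2)) * (1/2)
              - (x 0 * (3/5) + x 1 * d + x 2 * (-(3/5)) + x 3 * (-d)) * (3/5)) ^ 2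
          + (x 1 - (x 0 * (1/2) + x 1 * (1/2) + x 2 * (1/2) + x 3 * (1/2)) * (1/2)
              - (x 0 * (3/5) + x 1 * d + x 2 * (-(3/5)) + x 3 * (-d)) * d) ^ 2
          + (x 2 - (x 0 * (1/2) + x 1 * (1/2) + x 2 * (1/2) + x 3 * (1/2)) * (1/2)
              - (x 0 * (3/5) + x 1 * d + x 2 * (-(3/5)) + x 3 * (-d)) * (-(3/5))) ^ 2
          + (x 3 - (x 0 * (1/2) + x 1 * (1/2) + x 2 * (1/2) + x 3 * (1/2)) * (1/2)
              - (x 0 * (3/5) + x 1 * d + x 2 * (-(3/5)) + x 3 * (-d)) * (-d)) ^ 2 := by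
      linear_combination (-2 * (x 0 * (3/5) + x 1 * d + x 2 * (-(3/5)) + x 3 * (-d)) ^ 2) * hd2
    nlinarith [sq_nonneg (x 0 - (x 0 * (1/2) + x 1 * (1/2) + x 2 * (1/2) + x 3 * (1/2)) * (1/2)
              - (x 0 * (3/5) + x 1 * d + x 2 * (-(3/5)) + x 3 * (-d)) * (3/5)),
      sq_nonneg (x 1 - (x 0 * (1/2) + x 1 * (1/2) + x 2 * (1/2) + x 3 * (1/2)) * (1/2)
              - (x 0 * (3/5) + x 1 * d + x 2 * (-(3/5)) + x 3 * (-d)) * d),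
      sq_nonneg (x 2 - (x 0 * (1/2) + x 1 * (1/2) + x 2 * (1/2) + x 3 * (1/2)) * (1/2)
              - (x 0 * (3/5) + x 1 * d + x 2 * (-(3/5)) + x 3 * (-d)) * (-(3/5))),
      sq_nonneg (x 3 - (x 0 * (1/2) + x 1 * (1/2) + x 2 * (1/2) + x 3 * (1/2)) * (1/2)
              - (x 0 * (3/5) + x 1 * d + x 2 * (-(3/5)) + x 3 * (-d)) * (-d)), id1]
  -- dot products
  have hduu : ∑ j, u j * u j = 1 := by
    simp [hu, Fin.sum_univ_four]; norm_num
  have huv : ∑ j, u j * v j = 0 := by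
    simp [hu, hv, Fin.sum_univ_four]
  have hvu : ∑ j, v j * u j = 0 := by
    simp [hu, hv, Fin.sum_univ_four]
  have hvv : ∑ j, v j * v j = 1 := by
    simp only [hv, Fin.sum_univ_four, Matrix.cons_val_zero, Matrix.cons_val_one,
      Matrix.head_cons, Matrix.cons_val_two, Matrix.tail_cons, Matrix.cons_val_three]
    linear_combination 2 * hd2
  -- the projection
  set P : (Fin 4 → ℝ) →ₗ[ℝ] (Fin 4 → ℝ) :=
    { toFun := fun x => (∑ j, x j * u j) • u + (∑ j, x j * v j) • v
      map_add' := by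
        intro x y
        simp only [Pi.add_apply, add_mul, Finset.sum_add_distrib, add_smul]
        abel
      map_smul' := by
        intro c x
        have h1 : ∑ j, (c • x) j * u j = c * ∑ j, x j * u j := by
          rw [Finset.mul_sum]
          exact Finset.sum_congr rfl fun j _ => by simp [mul_assoc]
        have h2 : ∑ j, (c • x) j * v j = c * ∑ j, x j * v j := by
          rw [Finset.mul_sum]
          exact Finset.sum_congr rfl fun j _ => by simp [mul_assoc]
        simp only [h1, h2, RingHom.id_apply, mul_smul, smul_add] } with hP
  have hPdef : ∀ x, P x = (∑ j, x j * u j) • u + (∑ j, x j * v j) • v := fun x => rfl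
  set Y : Submodule ℝ (Fin 4 → ℝ) := Submodule.span ℝ {u, v} with hYdef
  have huY : u ∈ Y := Submodule.subset_span (by simp)
  have hvY : v ∈ Y := Submodule.subset_span (by simp)
  have hPu : P u = u := by
    rw [hPdef, hduu, huv]; simp
  have hPv : P v = v := by
    rw [hPdef, hvu, hvv]; simp
  -- two vanishing coordinates force the zero vector
  have hzero : ∀ s t : ℝ, ∀ i j : Fin 4, i ≠ j →
      (s • u + t • v) i = 0 → (s • u + t • v) j = 0 → s = 0 ∧ t = 0 := by
    have key : ∀ s t c1 c2 : ℝ, c1 ≠ c2 → s/2 + c1*t = 0 → s/2 + c2*t = 0 → s = 0 ∧ t = 0 := by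
      intro s t c1 c2 hne e1 e2
      have h3 : (c1 - c2) * t = 0 := by linarith [e1, e2, sub_mul c1 c2 t]
      have ht : t = 0 := by
        rcases mul_eq_zero.mp h3 with h | h
        · exact absurd (by linarith : c1 = c2) hne
        · exact h
      refine ⟨?_, ht⟩
      rw [ht, mul_zero, add_zero] at e1
      linarith
    have hcoords : ∀ s t : ℝ, ∀ i : Fin 4,
        (s • u + t • v) i = s/2 + (![3/5, d, -(3/5), -d] : Fin 4 → ℝ) i * t := by
      intro s t i
      fin_cases i <;>
        simp [hu, hv, Matrix.cons_val_zero, Matrix.cons_val_one, Matrix.head_cons] <;> ring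
    intro s t i j hij h1 h2
    rw [hcoords] at h1 h2
    refine key s t _ _ ?_ h1 h2
    fin_cases i <;> fin_cases j <;>
      first
      | exact absurd rfl hij
      | (norm_num; done)
      | (norm_num; intro h; linarith)
      | (intro h; norm_num at h; linarith)
  -- linear independence and finrank
  have hli : LinearIndependent ℝ ![u, v] := by
    rw [LinearIndependent.pair_iff]
    intro s t h
    exact hzero s t 0 1 (by decide) (by rw [h]; rfl) (by rw [h]; rfl)
  have hfin : Module.finrank ℝ Y = 2 := by
    have hrange : Set.range ![u, v] = {u, v} := by
      rw [Matrix.range_cons, Matrix.range_cons, Matrix.range_empty]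
      simp [Set.pair_comm]
    rw [hYdef, ← hrange, finrank_span_eq_card hli]
    simp
  refine ⟨Y, P, hfin, ?_, ?_, ?_, ?_, ?_, ?_⟩
  · -- range P = Y
    apply le_antisymm
    · rintro y ⟨x, rfl⟩
      rw [hPdef]
      exact Submodule.add_mem _ (Submodule.smul_mem _ _ huY) (Submodule.smul_mem _ _ hvY)
    · rw [hYdef, Submodule.span_le]
      rintro y (rfl | rfl)
      · exact ⟨u, hPu⟩
      · exact ⟨v, hPv⟩
  · -- idempotent
    intro x
    conv_lhs => rw [hPdef x]
    rw [map_add, LinearMap.map_smul, LinearMap.map_smul, hPu, hPv, hPdef x]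
  · -- contraction
    intro x
    rw [hPdef, hY]
    calc Real.sqrt ((∑ j, x j * u j) ^ 2 + (∑ j, x j * v j) ^ 2)
        ≤ Real.sqrt (∑ j, x j ^ 2) := Real.sqrt_le_sqrt (hB x)
      _ ≤ nrm x := hnrm_lb x
  · -- norm at least one
    intro c hc
    have h1 : nrm u = 1 := by
      have : u = (1:ℝ) • u + (0:ℝ) • v := by simp
      rw [this, hY]
      norm_num
    have := hc u
    rw [hPu, h1] at this
    linarith
  · -- isometric to ℓ₂²
    exact ⟨u, v, huY, hvY, fun y hy => by
      obtain ⟨s, t, h⟩ := Submodule.mem_span_pair.mp hy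
      exact ⟨s, t, h.symm⟩, hY⟩
  · -- not spanned by disjointly supported vectors
    rintro ⟨p, q, hdis, hspan⟩
    have hpY : p ∈ Y := hspan ▸ Submodule.subset_span (by simp)
    have hqY : q ∈ Y := hspan ▸ Submodule.subset_span (by simp)
    have hu0 : u 0 = 1/2 := by simp [hu]
    have hp0 : p ≠ 0 := by
      rintro rfl
      rw [Submodule.span_insert_zero] at hspan
      obtain ⟨α, hα⟩ := Submodule.mem_span_singleton.mp (hspan ▸ huY)
      obtain ⟨β, hβ⟩ := Submodule.mem_span_singleton.mp (hspan ▸ hvY)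
      have hz : β • u + (-α) • v = 0 := by
        rw [← hα, ← hβ, smul_smul, smul_smul, ← add_smul]
        ring_nf
        simp [mul_comm]
      obtain ⟨hβ0, hα0⟩ := hzero β (-α) 0 1 (by decide) (by rw [hz]; rfl) (by rw [hz]; rfl)
      have hα0' : α = 0 := by linarith
      rw [hα0', zero_smul] at hα
      have := congrFun hα 0
      rw [hu0] at this
      norm_num at this
    have hq0 : q ≠ 0 := by
      rintro rfl
      rw [Set.pair_comm, Submodule.span_insert_zero] at hspan
      obtain ⟨α, hα⟩ := Submodule.mem_span_singleton.mp (hspan ▸ huY)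
      obtain ⟨β, hβ⟩ := Submodule.mem_span_singleton.mp (hspan ▸ hvY)
      have hz : β • u + (-α) • v = 0 := by
        rw [← hα, ← hβ, smul_smul, smul_smul, ← add_smul]
        ring_nf
        simp [mul_comm]
      obtain ⟨hβ0, hα0⟩ := hzero β (-α) 0 1 (by decide) (by rw [hz]; rfl) (by rw [hz]; rfl)
      have hα0' : α = 0 := by linarith
      rw [hα0', zero_smul] at hα
      have := congrFun hα 0
      rw [hu0] at this
      norm_num at this
    obtain ⟨s1, t1, hp⟩ := Submodule.mem_span_pair.mp hpY
    obtain ⟨s2, t2, hq⟩ := Submodule.mem_span_pair.mp hqY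
    have hp1 : ∀ i j : Fin 4, i ≠ j → p i = 0 → p j = 0 → False := by
      intro i j hij h1 h2
      obtain ⟨hs, ht⟩ := hzero s1 t1 i j hij (by rw [hp]; exact h1) (by rw [hp]; exact h2)
      apply hp0
      rw [← hp, hs, ht]
      simp
    have hq1 : ∀ i j : Fin 4, i ≠ j → q i = 0 → q j = 0 → False := by
      intro i j hij h1 h2
      obtain ⟨hs, ht⟩ := hzero s2 t2 i j hij (by rw [hq]; exact h1) (by rw [hq]; exact h2)
      apply hq0
      rw [← hq, hs, ht]
      simp
    obtain ⟨i0, hi0⟩ : ∃ i, q i ≠ 0 := by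
      by_contra h
      push_neg at h
      exact hq0 (funext h)
    have hqz : ∀ i, i ≠ i0 → q i = 0 := by
      intro i hi
      by_contra hqi
      have h1 : p i = 0 := by
        by_contra hpi
        exact (Set.disjoint_left.mp hdis (Function.mem_support.mpr hpi)) (Function.mem_support.mpr hqi)
      have h2 : p i0 = 0 := by
        by_contra hpi
        exact (Set.disjoint_left.mp hdis (Function.mem_support.mpr hpi)) (Function.mem_support.mpr hi0)
      exact hp1 i i0 hi h1 h2
    fin_cases i0
    · exact hq1 1 2 (by decide) (hqz 1 (by decide)) (hqz 2 (by decide))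
    · exact hq1 0 2 (by decide) (hqz 0 (by decide)) (hqz 2 (by decide))
    · exact hq1 0 1 (by decide) (hqz 0 (by decide)) (hqz 1 (by decide))
    · exact hq1 0 1 (by decide) (hqz 0 (by decide)) (hqz 1 (by decide))
end
end
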